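/- arXiv:2111.00248 — 2 statements merged into one kernel-verified Lean document; each statement's English description precedes it below -/
import Mathlib

section
/- Let d ≥ 1, B ≥ 0, λ > 0, M > 0. Let (Ω, F, P) be a probability space and W : Ω × [0,∞) → ℝ^d a process with almost surely continuous paths. Suppose that for each x ∈ ℝ^d there are: a process X^x with continuous paths satisfying almost surely |X^x_t − x − W_t| ≤ B·t for all t ≥ 0, and a random variable T^x ≥ 0 with P(T^x > t) ≤ exp(−λt) for all t ≥ 0. Then for every δ > 0 there exists M₁ > M such that for all x with |x| ≥ M₁: E[∫₀^{T^x} 1(inf_{0≤s≤t} |X^x_s| ≤ M) dt] < δ. -/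
/-!
Fix a horizon `t₀` with `e^{-λ t₀} / λ < δ / 2` and a level `r` such that `‖W‖` exceeds `r` on
`[0, t₀]` with probability less than `δ / (2 t₀)` (continuous paths are bounded on compacts).
If `‖x‖ > M + B t₀ + r`, then off that event `X^x` stays outside the ball of radius `M` until
`t₀`, so the occupation time before `T^x` is at most `(T^x - t₀)⁺`; on the event it is at most
`t₀ + (T^x - t₀)⁺`. By the layer-cake formula and the tail bound, `E (T^x - t₀)⁺ ≤ e^{-λ t₀} / λ`.
-/
open MeasureTheory Filter Topology Set

section ExponentialTail

variable {Ω : Type*} [MeasurableSpace Ω] {P : Measure Ω} {T : Ω → ℝ} {lam t₀ : ℝ}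

theorem lintegral_exp_neg_mul_Ioi_zero (hlam : 0 < lam) :
    ∫⁻ t in Ioi 0, ENNReal.ofReal (Real.exp (-lam * t)) = ENNReal.ofReal (1 / lam) := by
  rw [← ofReal_integral_eq_lintegral_ofReal (exp_neg_integrableOn_Ioi 0 hlam)
    (ae_of_all _ fun t => (Real.exp_pos _).le), integral_exp_mul_Ioi (neg_lt_zero.mpr hlam)]
  simp [neg_div]

theorem lintegral_max_sub_le_of_exp_tail (hT : Measurable T) (hlam : 0 < lam) (ht₀ : 0 ≤ t₀)
    (htail : ∀ t, 0 ≤ t → P {ω | t < T ω} ≤ ENNReal.ofReal (Real.exp (-lam * t))) :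
    ∫⁻ ω, ENNReal.ofReal (max (T ω - t₀) 0) ∂P ≤ ENNReal.ofReal (Real.exp (-lam * t₀) / lam) := by
  rw [lintegral_eq_lintegral_meas_lt P (ae_of_all _ fun ω => le_max_right (T ω - t₀) 0)
    (by fun_prop : Measurable fun ω => max (T ω - t₀) 0).aemeasurable]
  calc ∫⁻ t in Ioi 0, P {ω | t < max (T ω - t₀) 0}
      ≤ ∫⁻ t in Ioi 0, ENNReal.ofReal (Real.exp (-lam * t₀)) *
          ENNReal.ofReal (Real.exp (-lam * t)) := by
        refine setLIntegral_mono' measurableSet_Ioi fun t (ht : 0 < t) => ?_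
        have hsub : {ω | t < max (T ω - t₀) 0} ⊆ {ω | t₀ + t < T ω} := fun ω hω =>
          show t₀ + t < T ω by linarith [(lt_max_iff.mp hω).resolve_right ht.not_gt]
        calc P {ω | t < max (T ω - t₀) 0} ≤ P {ω | t₀ + t < T ω} := measure_mono hsub
          _ ≤ ENNReal.ofReal (Real.exp (-lam * (t₀ + t))) := htail _ (by linarith)
          _ = _ := by rw [mul_add, Real.exp_add, ENNReal.ofReal_mul (Real.exp_pos _).le]
    _ = ENNReal.ofReal (Real.exp (-lam * t₀) / lam) := by
        rw [lintegral_const_mul' _ _ ENNReal.ofReal_ne_top, lintegral_exp_neg_mul_Ioi_zero hlam,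
          ← ENNReal.ofReal_mul (Real.exp_pos _).le, mul_one_div]

theorem integrable_max_sub_of_exp_tail (hT : Measurable T) (hlam : 0 < lam) (ht₀ : 0 ≤ t₀)
    (htail : ∀ t, 0 ≤ t → P {ω | t < T ω} ≤ ENNReal.ofReal (Real.exp (-lam * t))) :
    Integrable (fun ω => max (T ω - t₀) 0) P := by
  refine ⟨(by fun_prop : Measurable fun ω => max (T ω - t₀) 0).aestronglyMeasurable, ?_⟩
  rw [hasFiniteIntegral_iff_ofReal (ae_of_all _ fun ω => le_max_right (T ω - t₀) 0)]
  exact (lintegral_max_sub_le_of_exp_tail hT hlam ht₀ htail).trans_lt ENNReal.ofReal_lt_top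

theorem integral_max_sub_le_of_exp_tail (hT : Measurable T) (hlam : 0 < lam) (ht₀ : 0 ≤ t₀)
    (htail : ∀ t, 0 ≤ t → P {ω | t < T ω} ≤ ENNReal.ofReal (Real.exp (-lam * t))) :
    ∫ ω, max (T ω - t₀) 0 ∂P ≤ Real.exp (-lam * t₀) / lam := by
  rw [integral_eq_lintegral_of_nonneg_ae (ae_of_all _ fun ω => le_max_right (T ω - t₀) 0)
    (by fun_prop : Measurable fun ω => max (T ω - t₀) 0).aestronglyMeasurable]
  exact ENNReal.toReal_le_of_le_ofReal (by positivity)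
    (lintegral_max_sub_le_of_exp_tail hT hlam ht₀ htail)

end ExponentialTail

section Paths

variable {E : Type*} [NormedAddCommGroup E]

theorem norm_le_on_Icc_of_forall_rat {f : ℝ → E} (hf : Continuous f) {t₀ r : ℝ} (ht₀ : 0 < t₀)
    (h : ∀ q : ℚ, (q : ℝ) ∈ Icc 0 t₀ → ‖f q‖ ≤ r) : ∀ s ∈ Icc 0 t₀, ‖f s‖ ≤ r := by
  intro s hs
  by_contra! hlt
  have hU : IsOpen {u | r < ‖f u‖} := isOpen_lt continuous_const hf.norm
  have hne : ({u | r < ‖f u‖} ∩ Ioo 0 t₀).Nonempty :=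
    mem_closure_iff.mp (by rwa [closure_Ioo ht₀.ne]) _ hU hlt
  obtain ⟨q, hq⟩ := Rat.denseRange_cast.exists_mem_open (hU.inter isOpen_Ioo) hne
  exact (h q (Ioo_subset_Icc_self hq.2)).not_gt hq.1

theorem lt_norm_of_norm_sub_sub_le {X w : ℝ → E} {x : E} {B M r t₀ : ℝ} (hB : 0 ≤ B)
    (hXw : ∀ t, 0 ≤ t → ‖X t - x - w t‖ ≤ B * t) (hw : ∀ s ∈ Icc 0 t₀, ‖w s‖ ≤ r)
    (hx : M + B * t₀ + r < ‖x‖) : ∀ s ∈ Icc 0 t₀, M < ‖X s‖ := by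
  intro s hs
  have hBs : B * s ≤ B * t₀ := mul_le_mul_of_nonneg_left hs.2 hB
  have : ‖x‖ ≤ ‖X s‖ + ‖X s - x - w s‖ + ‖w s‖ := calc
    ‖x‖ = ‖X s - (X s - x - w s) - w s‖ := by abel_nf
    _ ≤ ‖X s‖ + ‖X s - x - w s‖ + ‖w s‖ :=
      (norm_sub_le _ _).trans (add_le_add_left (norm_sub_le _ _) _)
  linarith [hXw s hs.1, hw s hs]

theorem setIntegral_Ioc_indicator_one_le {S : Set ℝ} (hS : MeasurableSet S) {a b c : ℝ}
    (h : S ∩ Ioc a b ⊆ Ioc c b) :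
    ∫ t in Ioc a b, S.indicator (fun _ => (1 : ℝ)) t ≤ max (b - c) 0 := by
  rw [integral_indicator_const _ hS, measureReal_restrict_apply hS, smul_eq_mul, mul_one,
    ← Real.volume_real_Ioc]
  exact measureReal_mono h measure_Ioc_lt_top.ne

def timesAfterHitting (X : ℝ → E) (M : ℝ) : Set ℝ := {t | ∃ s ∈ Icc 0 t, ‖X s‖ ≤ M}

theorem measurableSet_timesAfterHitting (X : ℝ → E) (M : ℝ) :
    MeasurableSet (timesAfterHitting X M) :=
  IsUpperSet.ordConnected (s := timesAfterHitting X M)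
    (fun _ _ hab ⟨s, hs, hXs⟩ => ⟨s, ⟨hs.1, hs.2.trans hab⟩, hXs⟩) |>.measurableSet

theorem timesAfterHitting_inter_Ioc_subset {X : ℝ → E} {M t₀ T : ℝ}
    (hX : ∀ s ∈ Icc 0 t₀, M < ‖X s‖) : timesAfterHitting X M ∩ Ioc 0 T ⊆ Ioc t₀ T :=
  fun _ ⟨⟨s, hs, hXs⟩, _, htT⟩ =>
    ⟨not_le.mp fun htt₀ => (hX s ⟨hs.1, hs.2.trans htt₀⟩).not_ge hXs, htT⟩

end Paths

section Exceedance

variable {Ω E : Type*} [NormedAddCommGroup E]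

/-- Sampling only rational times keeps this event measurable; for a continuous path it is
equivalent to exceeding `r` somewhere on `[0, t₀]` (`norm_le_on_Icc_of_forall_rat`). -/
def exceedsAtRationalTimes (W : Ω → ℝ → E) (t₀ r : ℝ) : Set Ω :=
  {ω | ∃ q : ℚ, (q : ℝ) ∈ Icc 0 t₀ ∧ r < ‖W ω q‖}

variable {W : Ω → ℝ → E} {t₀ : ℝ}

theorem antitone_exceedsAtRationalTimes : Antitone (exceedsAtRationalTimes W t₀) :=
  fun _ _ hrr' _ ⟨q, hq, hlt⟩ => ⟨q, hq, hrr'.trans_lt hlt⟩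

theorem occupation_le_of_norm_sub_sub_le {ω : Ω} (hWω : Continuous (W ω)) {X : ℝ → E} {x : E}
    {B M r T : ℝ} (hB : 0 ≤ B) (ht₀ : 0 < t₀) (hXW : ∀ t, 0 ≤ t → ‖X t - x - W ω t‖ ≤ B * t)
    (hx : M + B * t₀ + r < ‖x‖) :
    ∫ t in Ioc 0 T, (timesAfterHitting X M).indicator (fun _ => (1 : ℝ)) t ≤
      t₀ * (exceedsAtRationalTimes W t₀ r).indicator 1 ω + max (T - t₀) 0 := by
  have hS := measurableSet_timesAfterHitting X M
  by_cases hω : ω ∈ exceedsAtRationalTimes W t₀ r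
  · rw [indicator_of_mem hω, Pi.one_apply, mul_one]
    calc _ ≤ max (T - 0) 0 := setIntegral_Ioc_indicator_one_le hS fun t ht => ht.2
      _ ≤ t₀ + max (T - t₀) 0 := max_le (by linarith [le_max_left (T - t₀) 0]) (by positivity)
  · rw [indicator_of_notMem hω, mul_zero, zero_add]
    have hW : ∀ s ∈ Icc 0 t₀, ‖W ω s‖ ≤ r :=
      norm_le_on_Icc_of_forall_rat hWω ht₀ fun q hq => not_lt.mp fun h => hω ⟨q, hq, h⟩
    exact setIntegral_Ioc_indicator_one_le hS
      (timesAfterHitting_inter_Ioc_subset (lt_norm_of_norm_sub_sub_le hB hXW hW hx))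

variable [MeasurableSpace Ω] [MeasurableSpace E] [OpensMeasurableSpace E]

theorem measurableSet_exceedsAtRationalTimes (hW : ∀ t, Measurable fun ω => W ω t) (r : ℝ) :
    MeasurableSet (exceedsAtRationalTimes W t₀ r) := by
  simp only [exceedsAtRationalTimes, ofPred_exists, ofPred_and]
  exact .iUnion fun q =>
    (MeasurableSet.const _).inter (measurableSet_lt measurable_const (hW q).norm)

theorem tendsto_measure_exceedsAtRationalTimes {P : Measure Ω} [IsFiniteMeasure P]
    (hW : ∀ t, Measurable fun ω => W ω t) (hWcont : ∀ᵐ ω ∂P, Continuous (W ω)) :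
    Tendsto (fun r => P (exceedsAtRationalTimes W t₀ r)) atTop (𝓝 0) := by
  have hnull : P (⋂ r : ℝ, exceedsAtRationalTimes W t₀ r) = 0 := by
    refine measure_mono_null (fun ω hω => ?_ : _ ⊆ {ω | ¬Continuous (W ω)}) (ae_iff.mp hWcont)
    intro hcont
    obtain ⟨C, hC⟩ :=
      isCompact_Icc.exists_bound_of_continuousOn (hcont.continuousOn (s := Icc 0 t₀))
    obtain ⟨q, hq, hlt⟩ := mem_iInter.mp hω C
    exact (hC q hq).not_gt hlt
  rw [← hnull]
  exact tendsto_measure_iInter_atTop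
    (fun r => (measurableSet_exceedsAtRationalTimes hW r).nullMeasurableSet)
    antitone_exceedsAtRationalTimes ⟨0, measure_ne_top _ _⟩

end Exceedance

theorem stmt7_general (d : ℕ) (B lam M : ℝ) (hB : 0 ≤ B) (hlam : 0 < lam)
    {Ω : Type*} [MeasurableSpace Ω] (P : Measure Ω) [IsProbabilityMeasure P]
    (W : Ω → ℝ → EuclideanSpace ℝ (Fin d))
    (hWmeas : Measurable (Function.uncurry W))
    (hWcont : ∀ᵐ ω ∂P, Continuous (W ω))
    (X : EuclideanSpace ℝ (Fin d) → Ω → ℝ → EuclideanSpace ℝ (Fin d))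
    (hXW : ∀ x, ∀ᵐ ω ∂P, ∀ t, 0 ≤ t → ‖X x ω t - x - W ω t‖ ≤ B * t)
    (T : EuclideanSpace ℝ (Fin d) → Ω → ℝ)
    (hTmeas : ∀ x, Measurable (T x))
    (htail : ∀ x t, 0 ≤ t → P {ω | t < T x ω} ≤ ENNReal.ofReal (Real.exp (-lam * t))) :
    ∀ δ > 0, ∃ M₁ > M, ∀ x : EuclideanSpace ℝ (Fin d), M₁ ≤ ‖x‖ →
      ∫ ω, (∫ t in Set.Ioc 0 (T x ω),
          Set.indicator {t : ℝ | ∃ s ∈ Set.Icc (0:ℝ) t, ‖X x ω s‖ ≤ M} (fun _ => (1:ℝ)) t) ∂P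
        < δ := by
  intro δ hδ
  have hexp : Tendsto (fun t => Real.exp (-lam * t) / lam) atTop (𝓝 0) := by
    simpa using (Real.tendsto_exp_atBot.comp
      (tendsto_id.const_mul_atTop_of_neg (neg_lt_zero.mpr hlam))).div_const lam
  obtain ⟨t₀, ht₀, ht₀δ⟩ : ∃ t₀ > 0, Real.exp (-lam * t₀) / lam < δ / 2 :=
    ((eventually_gt_atTop 0).and (hexp.eventually_lt_const (half_pos hδ))).exists
  have hW : ∀ t, Measurable fun ω => W ω t := fun _ => hWmeas.of_uncurry_right
  obtain ⟨r, hr, hrδ⟩ :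
      ∃ r ≥ 0, P (exceedsAtRationalTimes W t₀ r) < ENNReal.ofReal (δ / (2 * t₀)) :=
    ((eventually_ge_atTop 0).and
      ((tendsto_measure_exceedsAtRationalTimes hW hWcont).eventually_lt_const
        (ENNReal.ofReal_pos.mpr (by positivity)))).exists
  refine ⟨M + B * t₀ + r + 1, by nlinarith, fun x hx => ?_⟩
  have hbad := measurableSet_exceedsAtRationalTimes hW (t₀ := t₀) r
  have hind : Integrable ((exceedsAtRationalTimes W t₀ r).indicator (1 : Ω → ℝ)) P :=
    (integrable_const 1).indicator hbad
  have hexcess := integrable_max_sub_of_exp_tail (hTmeas x) hlam ht₀.le (htail x)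
  calc _ ≤ ∫ ω, t₀ * (exceedsAtRationalTimes W t₀ r).indicator 1 ω + max (T x ω - t₀) 0 ∂P := by
        refine integral_mono_of_nonneg (ae_of_all _ fun ω => integral_nonneg fun t => ?_)
          ((hind.const_mul t₀).add hexcess) ?_
        · exact indicator_nonneg (fun _ _ => zero_le_one) t
        · filter_upwards [hWcont, hXW x] with ω hWω hXWω
          exact occupation_le_of_norm_sub_sub_le hWω hB ht₀ hXWω (by linarith)
    _ = t₀ * P.real (exceedsAtRationalTimes W t₀ r) + ∫ ω, max (T x ω - t₀) 0 ∂P := by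
        rw [integral_add (hind.const_mul t₀) hexcess,
          integral_const_mul, integral_indicator_one hbad]
    _ < t₀ * (δ / (2 * t₀)) + δ / 2 :=
        add_lt_add_of_lt_of_le (mul_lt_mul_of_pos_left (ENNReal.toReal_lt_of_lt_ofReal hrδ) ht₀)
          ((integral_max_sub_le_of_exp_tail (hTmeas x) hlam ht₀.le (htail x)).trans ht₀δ.le)
    _ = δ := by field_simp; ring

/-- Lemma 1 of the paper in pathwise form: if `X^x` stays within `B t` of `x + W_t` (a.s.),
`W` has a.s. continuous paths, and `T^x ≥ 0` has exponential tail with rate `λ`, then for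
every `δ > 0` there is `M₁ > M` such that for all `‖x‖ ≥ M₁`, the expected time spent by
`X^x` within distance `M` of the origin before `T^x` is `< δ`. -/
theorem stmt7 (d : ℕ) (hd : 1 ≤ d) (B lam M : ℝ) (hB : 0 ≤ B) (hlam : 0 < lam) (hM : 0 < M)
    {Ω : Type*} [MeasurableSpace Ω] (P : Measure Ω) [IsProbabilityMeasure P]
    (W : Ω → ℝ → EuclideanSpace ℝ (Fin d))
    (hWmeas : Measurable (Function.uncurry W))
    (hWcont : ∀ᵐ ω ∂P, Continuous (W ω))
    (X : EuclideanSpace ℝ (Fin d) → Ω → ℝ → EuclideanSpace ℝ (Fin d))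
    (hXmeas : ∀ x, Measurable (Function.uncurry (X x)))
    (hXcont : ∀ x ω, Continuous (X x ω))
    (hXW : ∀ x, ∀ᵐ ω ∂P, ∀ t, 0 ≤ t → ‖X x ω t - x - W ω t‖ ≤ B * t)
    (T : EuclideanSpace ℝ (Fin d) → Ω → ℝ)
    (hTmeas : ∀ x, Measurable (T x)) (hT0 : ∀ x ω, 0 ≤ T x ω)
    (htail : ∀ x t, 0 ≤ t → P {ω | t < T x ω} ≤ ENNReal.ofReal (Real.exp (-lam * t))) :
    ∀ δ > 0, ∃ M₁ > M, ∀ x : EuclideanSpace ℝ (Fin d), M₁ ≤ ‖x‖ →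
      ∫ ω, (∫ t in Set.Ioc 0 (T x ω),
          Set.indicator {t : ℝ | ∃ s ∈ Set.Icc (0:ℝ) t, ‖X x ω s‖ ≤ M} (fun _ => (1:ℝ)) t) ∂P
        < δ :=
  stmt7_general d B lam M hB hlam P W hWmeas hWcont X hXW T hTmeas htail
end

section
/- Let (Ω, F, P) be a probability space with a filtration (F_n)_{n∈ℕ}. Let (Y_n) be an adapted sequence of nonnegative integrable random variables, (S_n) an adapted nondecreasing sequence of nonnegative integrable random variables with S₀ = 0, and (A_n) a nonincreasing sequence of events with A_n ∈ F_n. Let α, β, λ̄₀, λ̲₁ > 0 with λ̲₁·α > λ̄₀·β. Assume for every n: (i) almost surely (S_{n+1} − S_n)·1_{A_n^c} = 0; (ii) if n is even: E[Y_{n+1} | F_n] ≤ Y_n − α·E[S_{n+1} − S_n | F_n] a.s. and 1_{A_n}·E[S_{n+1} − S_n | F_n] ≥ λ̄₀⁻¹·1_{A_n} a.s.; (iii) if n is odd: E[Y_{n+1} | F_n] ≤ Y_n + β·E[S_{n+1} − S_n | F_n] a.s. and 1_{A_n}·E[S_{n+1} − S_n | F_n] ≤ λ̲₁⁻¹·1_{A_n}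 a.s. Then, with q := λ̄₀β/(λ̲₁α) ∈ (0,1) and c := min((1−q)α/2, (1−q)β/(2q)), one has sup_n E[S_n] ≤ c⁻¹·E[Y₀]. -/
/-!
Taking expectations turns the hypotheses into a deterministic recursion for `y n = E[Y n]` and
the expected increments `d n = E[S (n+1) - S n]`: `y` drops by `α d n` on even steps and rises by
at most `β d n` on odd ones, while
`d (2k+1) ≤ λ̲₁⁻¹ P(A (2k+1)) ≤ λ̲₁⁻¹ P(A (2k)) ≤ (λ̄₀/λ̲₁) d (2k)`. By the balance condition
each odd rise is thus dominated by the preceding drop, leaving a net decrease of at least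
`c (d (2k) + d (2k+1))` per pair of steps; since `y ≥ 0`, summing gives `c E[S N] ≤ y 0`.
-/

open MeasureTheory

section Deterministic

theorem sum_range_mul_le_sub_of_step_le {y d w : ℕ → ℝ}
    (hstep : ∀ n, y (n + 1) ≤ y n - w n * d n) (N : ℕ) :
    ∑ n ∈ Finset.range N, w n * d n ≤ y 0 - y N := by
  induction N with
  | zero => simp
  | succ N ih => rw [Finset.sum_range_succ]; linarith [hstep N]

/-- Each odd increment is paid for by the preceding even one:
`(c + β) d₁ ≤ (c + β) K d₀ ≤ (α - c) d₀`. -/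
theorem mul_sum_range_le_sum_alternating {d : ℕ → ℝ} {α β K c : ℝ} (hd : ∀ n, 0 ≤ d n)
    (hcβ : 0 ≤ c + β) (hK : 0 ≤ K) (hKc : c + (c + β) * K ≤ α)
    (hpair : ∀ k, d (2 * k + 1) ≤ K * d (2 * k)) (N : ℕ) :
    c * ∑ n ∈ Finset.range N, d n
      ≤ ∑ n ∈ Finset.range N, (if Even n then α else -β) * d n := by
  have heven : ∀ k, c * ∑ n ∈ Finset.range (2 * k), d n
      ≤ ∑ n ∈ Finset.range (2 * k), (if Even n then α else -β) * d n := by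
    intro k
    induction k with
    | zero => simp
    | succ k ih =>
      have hodd : ¬Even (2 * k + 1) := Nat.not_even_iff_odd.2 (odd_two_mul_add_one k)
      rw [show 2 * (k + 1) = 2 * k + 1 + 1 by ring, Finset.sum_range_succ, Finset.sum_range_succ,
        Finset.sum_range_succ, Finset.sum_range_succ, if_pos (even_two_mul k), if_neg hodd]
      have := mul_le_mul_of_nonneg_left (hpair k) hcβ
      nlinarith [hd (2 * k)]
  obtain ⟨k, rfl | rfl⟩ := Nat.even_or_odd' N
  · exact heven k
  · rw [Finset.sum_range_succ, Finset.sum_range_succ, if_pos (even_two_mul k), mul_add]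
    nlinarith [heven k, hd (2 * k), mul_nonneg hcβ hK]

theorem mul_sum_range_le_of_alternating_step_le {y d : ℕ → ℝ} {α β K c : ℝ}
    (hy : ∀ n, 0 ≤ y n) (hd : ∀ n, 0 ≤ d n) (hcβ : 0 ≤ c + β) (hK : 0 ≤ K)
    (hKc : c + (c + β) * K ≤ α)
    (hstep : ∀ n, y (n + 1) ≤ y n - (if Even n then α else -β) * d n)
    (hpair : ∀ k, d (2 * k + 1) ≤ K * d (2 * k)) (N : ℕ) :
    c * ∑ n ∈ Finset.range N, d n ≤ y 0 :=
  (mul_sum_range_le_sum_alternating hd hcβ hK hKc hpair N).trans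
    ((sum_range_mul_le_sub_of_step_le hstep N).trans (sub_le_self _ (hy N)))

variable {α β K q c : ℝ}

theorem rate_pos (hα : 0 < α) (hβ : 0 < β) (hq0 : 0 < q) (hq1 : q < 1)
    (hc : c = min ((1 - q) * α / 2) ((1 - q) * β / (2 * q))) : 0 < c := by
  have : 0 < 1 - q := by linarith
  rw [hc]; exact lt_min (by positivity) (by positivity)

theorem rate_add_mul_le (hα : 0 < α) (hβ : 0 < β) (hK : 0 < K) (hq : q = K * β / α)
    (hc : c = min ((1 - q) * α / 2) ((1 - q) * β / (2 * q))) : c + (c + β) * K ≤ α := by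
  have hcα : c ≤ (1 - q) * α / 2 := hc ▸ min_le_left _ _
  have hcK : c * K ≤ (1 - q) * α / 2 := by
    calc c * K ≤ (1 - q) * β / (2 * q) * K :=
          mul_le_mul_of_nonneg_right (hc ▸ min_le_right _ _) hK.le
      _ = (1 - q) * α / 2 := by rw [hq]; field_simp
  have hβK : β * K = q * α := by rw [hq]; field_simp
  linarith

end Deterministic

section CondExp

variable {Ω : Type*} {m mΩ : MeasurableSpace Ω} {μ : Measure Ω} {f g h : Ω → ℝ} {s : Set Ω}
  {a : ℝ}

theorem integral_le_add_mul_integral_of_condExp_le (hm : m ≤ mΩ) [SigmaFinite (μ.trim hm)]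
    (hg : Integrable g μ) (hle : ∀ᵐ ω ∂μ, μ[f | m] ω ≤ g ω + a * μ[h | m] ω) :
    ∫ ω, f ω ∂μ ≤ ∫ ω, g ω ∂μ + a * ∫ ω, h ω ∂μ := by
  have hint : Integrable (fun ω => a * μ[h | m] ω) μ := integrable_condExp.const_mul a
  calc ∫ ω, f ω ∂μ = ∫ ω, μ[f | m] ω ∂μ := (integral_condExp hm).symm
    _ ≤ ∫ ω, g ω + a * μ[h | m] ω ∂μ := integral_mono_ae integrable_condExp (hg.add hint) hle
    _ = ∫ ω, g ω ∂μ + a * ∫ ω, h ω ∂μ := by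
      rw [integral_add hg hint, integral_const_mul, integral_condExp hm]

theorem integral_le_sub_mul_integral_of_condExp_le (hm : m ≤ mΩ) [SigmaFinite (μ.trim hm)]
    (hg : Integrable g μ) (hle : ∀ᵐ ω ∂μ, μ[f | m] ω ≤ g ω - a * μ[h | m] ω) :
    ∫ ω, f ω ∂μ ≤ ∫ ω, g ω ∂μ - a * ∫ ω, h ω ∂μ := by
  simpa only [neg_mul, ← sub_eq_add_neg] using
    integral_le_add_mul_integral_of_condExp_le (a := -a) hm hg
      (by simpa only [neg_mul, ← sub_eq_add_neg] using hle)

theorem integral_eq_sum_range_integral_sub {S : ℕ → Ω → ℝ} (hS : ∀ n, Integrable (S n) μ)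
    (hS0 : ∀ ω, S 0 ω = 0) (N : ℕ) :
    ∫ ω, S N ω ∂μ = ∑ n ∈ Finset.range N, ∫ ω, S (n + 1) ω - S n ω ∂μ := by
  rw [← integral_finsetSum (f := fun n ω => S (n + 1) ω - S n ω) _
    fun n _ => (hS (n + 1)).sub (hS n)]
  congr with ω
  rw [Finset.sum_range_sub (fun n => S n ω), hS0, sub_zero]

variable [IsFiniteMeasure μ]

theorem mul_measureReal_le_integral_of_le_indicator_mul_condExp (hm : m ≤ mΩ)
    [SigmaFinite (μ.trim hm)] (hs : MeasurableSet s) (hh : 0 ≤ᵐ[μ] h)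
    (hle : ∀ᵐ ω ∂μ, a * s.indicator 1 ω ≤ s.indicator 1 ω * μ[h | m] ω) :
    a * μ.real s ≤ ∫ ω, h ω ∂μ := by
  have hind : Integrable (fun ω => s.indicator 1 ω * μ[h | m] ω) μ :=
    integrable_condExp.bdd_mul (c := 1) (by fun_prop) (Filter.Eventually.of_forall fun ω => by
      by_cases hω : ω ∈ s <;> simp [hω])
  calc a * μ.real s = ∫ ω, a * s.indicator 1 ω ∂μ := by
        rw [integral_const_mul, integral_indicator_one hs]
    _ ≤ ∫ ω, s.indicator 1 ω * μ[h | m] ω ∂μ :=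
      integral_mono_ae (((integrable_const 1).indicator hs).const_mul a) hind hle
    _ ≤ ∫ ω, μ[h | m] ω ∂μ := by
      refine integral_mono_ae hind integrable_condExp ?_
      filter_upwards [condExp_nonneg (m := m) hh] with ω hω
      by_cases hωs : ω ∈ s
      · simp [hωs]
      · simpa [hωs] using hω
    _ = ∫ ω, h ω ∂μ := integral_condExp hm

/-- Since `h` vanishes off the `m`-measurable set `s`, so does its conditional expectation. -/
theorem integral_le_mul_measureReal_of_indicator_mul_condExp_le (hm : m ≤ mΩ)
    [SigmaFinite (μ.trim hm)] (hs : MeasurableSet[m] s) (hh : Integrable h μ)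
    (hvanish : ∀ᵐ ω ∂μ, h ω * sᶜ.indicator 1 ω = 0)
    (hle : ∀ᵐ ω ∂μ, s.indicator 1 ω * μ[h | m] ω ≤ a * s.indicator 1 ω) :
    ∫ ω, h ω ∂μ ≤ a * μ.real s := by
  have hh_eq : h =ᵐ[μ] s.indicator h := by
    filter_upwards [hvanish] with ω hω
    by_cases hωs : ω ∈ s
    · simp [hωs]
    · simpa [hωs] using hω
  have hcond : μ[h | m] =ᵐ[μ] s.indicator (μ[h | m]) :=
    (condExp_congr_ae hh_eq).trans (condExp_indicator hh hs)
  calc ∫ ω, h ω ∂μ = ∫ ω, μ[h | m] ω ∂μ := (integral_condExp hm).symm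
    _ ≤ ∫ ω, a * s.indicator 1 ω ∂μ := by
      refine integral_mono_ae integrable_condExp
        (((integrable_const 1).indicator (hm s hs)).const_mul a) ?_
      filter_upwards [hcond, hle] with ω hω hωle
      by_cases hωs : ω ∈ s
      · simpa [hωs, ← hω] using hωle
      · simp only [hωs, not_false_eq_true, Set.indicator_of_notMem, mul_zero] at hω ⊢
        exact hω.le
    _ = a * μ.real s := by rw [integral_const_mul, integral_indicator_one (hm s hs)]

end CondExp

theorem stmt13_general {Ω : Type*} [mΩ : MeasurableSpace Ω] (P : Measure Ω) [IsProbabilityMeasure P]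
    (𝓕 : Filtration ℕ mΩ)
    (Y : ℕ → Ω → ℝ)
    (hY0 : ∀ n ω, 0 ≤ Y n ω) (hYint : ∀ n, Integrable (Y n) P)
    (S : ℕ → Ω → ℝ)
    (hSint : ∀ n, Integrable (S n) P)
    (hSzero : ∀ ω, S 0 ω = 0) (hSmono : ∀ n ω, S n ω ≤ S (n + 1) ω)
    (A : ℕ → Set Ω) (hAmeas : ∀ n, MeasurableSet[𝓕 n] (A n))
    (hAanti : ∀ n, A (n + 1) ⊆ A n)
    (α β lam0hi lam1lo : ℝ) (hα : 0 < α) (hβ : 0 < β)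
    (hl0 : 0 < lam0hi) (hl1 : 0 < lam1lo)
    (hbal : lam0hi * β < lam1lo * α)
    (hstop : ∀ n, ∀ᵐ ω ∂P,
      (S (n + 1) ω - S n ω) * (A n)ᶜ.indicator (fun _ => (1:ℝ)) ω = 0)
    (heven : ∀ n, Even n →
      (∀ᵐ ω ∂P, (P[Y (n + 1) | 𝓕 n]) ω
          ≤ Y n ω - α * (P[fun ω' => S (n + 1) ω' - S n ω' | 𝓕 n]) ω) ∧
      (∀ᵐ ω ∂P, lam0hi⁻¹ * (A n).indicator (fun _ => (1:ℝ)) ω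
          ≤ (A n).indicator (fun _ => (1:ℝ)) ω
              * (P[fun ω' => S (n + 1) ω' - S n ω' | 𝓕 n]) ω))
    (hodd : ∀ n, Odd n →
      (∀ᵐ ω ∂P, (P[Y (n + 1) | 𝓕 n]) ω
          ≤ Y n ω + β * (P[fun ω' => S (n + 1) ω' - S n ω' | 𝓕 n]) ω) ∧
      (∀ᵐ ω ∂P, (A n).indicator (fun _ => (1:ℝ)) ω
              * (P[fun ω' => S (n + 1) ω' - S n ω' | 𝓕 n]) ω
          ≤ lam1lo⁻¹ * (A n).indicator (fun _ => (1:ℝ)) ω))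
    (q c : ℝ) (hq : q = lam0hi * β / (lam1lo * α))
    (hc : c = min ((1 - q) * α / 2) ((1 - q) * β / (2 * q))) :
    ∀ n, ∫ ω, S n ω ∂P ≤ c⁻¹ * ∫ ω, Y 0 ω ∂P := by
  set d : ℕ → ℝ := fun n => ∫ ω, S (n + 1) ω - S n ω ∂P
  have hdrift : ∀ n, ∫ ω, Y (n + 1) ω ∂P ≤ ∫ ω, Y n ω ∂P - (if Even n then α else -β) * d n := by
    intro n
    rcases Nat.even_or_odd n with hn | hn
    · rw [if_pos hn]
      exact integral_le_sub_mul_integral_of_condExp_le (𝓕.le n) (hYint n) (heven n hn).1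
    · rw [if_neg (Nat.not_even_iff_odd.2 hn), neg_mul, sub_neg_eq_add]
      exact integral_le_add_mul_integral_of_condExp_le (𝓕.le n) (hYint n) (hodd n hn).1
  have hpair : ∀ k, d (2 * k + 1) ≤ lam0hi / lam1lo * d (2 * k) := by
    intro k
    have hAodd := integral_le_mul_measureReal_of_indicator_mul_condExp_le (𝓕.le _)
      (hAmeas _) ((hSint _).sub (hSint _)) (hstop _) (hodd _ (odd_two_mul_add_one k)).2
    have hAeven := mul_measureReal_le_integral_of_le_indicator_mul_condExp (𝓕.le _)
      (𝓕.le _ _ (hAmeas (2 * k))) (ae_of_all _ fun ω => sub_nonneg.2 (hSmono _ ω))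
      (heven _ (even_two_mul k)).2
    calc d (2 * k + 1) ≤ lam1lo⁻¹ * P.real (A (2 * k + 1)) := hAodd
      _ ≤ lam1lo⁻¹ * P.real (A (2 * k)) :=
        mul_le_mul_of_nonneg_left (measureReal_mono (hAanti _)) (by positivity)
      _ ≤ lam1lo⁻¹ * (lam0hi * d (2 * k)) := by gcongr; rwa [inv_mul_le_iff₀ hl0] at hAeven
      _ = lam0hi / lam1lo * d (2 * k) := by ring
  have hq1 : q < 1 := by rw [hq, div_lt_one (by positivity)]; exact hbal
  have hc0 : 0 < c := rate_pos hα hβ (by rw [hq]; positivity) hq1 hc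
  intro N
  rw [inv_mul_eq_div, le_div_iff₀' hc0, integral_eq_sum_range_integral_sub hSint hSzero]
  exact mul_sum_range_le_of_alternating_step_le (y := fun n => ∫ ω, Y n ω ∂P)
    (fun n => integral_nonneg (hY0 n)) (fun n => integral_nonneg fun ω => sub_nonneg.2 (hSmono n ω))
    (by linarith) (div_pos hl0 hl1).le
    (rate_add_mul_le hα hβ (div_pos hl0 hl1) (by rw [hq]; ring) hc) hdrift hpair N

/-- Discrete-time Lyapunov abstraction of Theorem 1: a nonnegative adapted sequence `Y`
decreasing at rate `α` per unit of elapsed stopped time `S` on even steps, increasing at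
rate at most `β` on odd steps, with conditional inter-step time bounds `λ̄₀⁻¹` from below
(even steps, on `A_n`) and `λ̲₁⁻¹` from above (odd steps, on `A_n`), the increments of `S`
vanishing off `A_n`, and the balance condition `λ̲₁ α > λ̄₀ β`, satisfies
`sup_n E[S_n] ≤ c⁻¹ E[Y₀]` where `q = λ̄₀β/(λ̲₁α)` and
`c = min((1-q)α/2, (1-q)β/(2q))`. -/
theorem stmt13 {Ω : Type*} [mΩ : MeasurableSpace Ω] (P : Measure Ω) [IsProbabilityMeasure P]
    (𝓕 : Filtration ℕ mΩ)
    (Y : ℕ → Ω → ℝ) (hYadapted : ∀ n, Measurable[𝓕 n] (Y n))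
    (hY0 : ∀ n ω, 0 ≤ Y n ω) (hYint : ∀ n, Integrable (Y n) P)
    (S : ℕ → Ω → ℝ) (hSadapted : ∀ n, Measurable[𝓕 n] (S n))
    (hS0 : ∀ n ω, 0 ≤ S n ω) (hSint : ∀ n, Integrable (S n) P)
    (hSzero : ∀ ω, S 0 ω = 0) (hSmono : ∀ n ω, S n ω ≤ S (n + 1) ω)
    (A : ℕ → Set Ω) (hAmeas : ∀ n, MeasurableSet[𝓕 n] (A n))
    (hAanti : ∀ n, A (n + 1) ⊆ A n)
    (α β lam0hi lam1lo : ℝ) (hα : 0 < α) (hβ : 0 < β)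
    (hl0 : 0 < lam0hi) (hl1 : 0 < lam1lo)
    (hbal : lam0hi * β < lam1lo * α)
    (hstop : ∀ n, ∀ᵐ ω ∂P,
      (S (n + 1) ω - S n ω) * (A n)ᶜ.indicator (fun _ => (1:ℝ)) ω = 0)
    (heven : ∀ n, Even n →
      (∀ᵐ ω ∂P, (P[Y (n + 1) | 𝓕 n]) ω
          ≤ Y n ω - α * (P[fun ω' => S (n + 1) ω' - S n ω' | 𝓕 n]) ω) ∧
      (∀ᵐ ω ∂P, lam0hi⁻¹ * (A n).indicator (fun _ => (1:ℝ)) ω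
          ≤ (A n).indicator (fun _ => (1:ℝ)) ω
              * (P[fun ω' => S (n + 1) ω' - S n ω' | 𝓕 n]) ω))
    (hodd : ∀ n, Odd n →
      (∀ᵐ ω ∂P, (P[Y (n + 1) | 𝓕 n]) ω
          ≤ Y n ω + β * (P[fun ω' => S (n + 1) ω' - S n ω' | 𝓕 n]) ω) ∧
      (∀ᵐ ω ∂P, (A n).indicator (fun _ => (1:ℝ)) ω
              * (P[fun ω' => S (n + 1) ω' - S n ω' | 𝓕 n]) ω
          ≤ lam1lo⁻¹ * (A n).indicator (fun _ => (1:ℝ)) ω))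
    (q c : ℝ) (hq : q = lam0hi * β / (lam1lo * α))
    (hc : c = min ((1 - q) * α / 2) ((1 - q) * β / (2 * q))) :
    ∀ n, ∫ ω, S n ω ∂P ≤ c⁻¹ * ∫ ω, Y 0 ω ∂P :=
  stmt13_general (mΩ := mΩ) P 𝓕 Y hY0 hYint S hSint hSzero hSmono A hAmeas hAanti α β lam0hi lam1lo
    hα hβ hl0 hl1 hbal hstop heven hodd q c hq hc
end
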